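/- arXiv:1903.11460 — 3 statements merged into one kernel-verified Lean document; each statement's English description precedes it below -/
import Mathlib

section
/- Let X ∈ ℝ^{m×n}, b ∈ ℝ^m, p a norm on ℝⁿ, λ > 0, σ ≥ 0, τ ≥ 0, and let β̂ minimize F(β) = ‖Xβ − b‖ + λ p(β) + (σ/2)‖β‖² + (τ/2)‖Xβ − b‖² over ℝⁿ. If Xβ̂ ≠ b, then writing ε̂ = b − Xβ̂, for every β ∈ ℝⁿ one has λ p(β) ≥ λ p(β̂) + ⟨ Xᵀε̂/‖ε̂‖ − σβ̂ + τ Xᵀε̂, β − β̂ ⟩; equivalently, the vector −Xᵀ(Xβ̂ − b)/‖Xβ̂ − b‖ − σβ̂ − τXᵀ(Xβ̂ − b) is a subgradient of λp at β̂. -/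
open scoped RealInnerProductSpace

noncomputable section

/-- A function `p` is a norm on a real vector space. -/
def IsNorm {E : Type*} [AddCommGroup E] [Module ℝ E] (p : E → ℝ) : Prop :=
  (∀ x y, p (x + y) ≤ p x + p y) ∧ (∀ (c : ℝ) (x : E), p (c • x) = |c| * p x) ∧
    (∀ x, p x = 0 ↔ x = 0)

/-- The dual norm `q_*(z) = sup {⟨z, β⟩ : q β ≤ 1}`. -/
def dualNorm {ι : Type*} [Fintype ι] (q : EuclideanSpace ℝ ι → ℝ)
    (z : EuclideanSpace ℝ ι) : ℝ :=
  sSup {r : ℝ | ∃ β : EuclideanSpace ℝ ι, q β ≤ 1 ∧ r = ⟪z, β⟫}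

/-- `β_S`: the vector agreeing with `β` on `S` and zero on the complement. -/
def projS {n : ℕ} (S : Finset (Fin n)) (β : EuclideanSpace ℝ (Fin n)) :
    EuclideanSpace ℝ (Fin n) :=
  WithLp.toLp 2 (fun i => if i ∈ S then β i else 0)

/-- `β_{S̄}`: the vector agreeing with `β` on the complement of `S` and zero on `S`. -/
def projSc {n : ℕ} (S : Finset (Fin n)) (β : EuclideanSpace ℝ (Fin n)) :
    EuclideanSpace ℝ (Fin n) :=
  WithLp.toLp 2 (fun i => if i ∈ S then 0 else β i)

/-- `β^{S̄}`: the restriction of `β` to the complement of `S`. -/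
def restrC {n : ℕ} (S : Finset (Fin n)) (β : EuclideanSpace ℝ (Fin n)) :
    EuclideanSpace ℝ {i : Fin n // i ∉ S} :=
  WithLp.toLp 2 (fun (j : {i : Fin n // i ∉ S}) => β j.1)

/-- Matrix-vector multiplication as a map between Euclidean spaces. -/
def mulVecE {m n : ℕ} (X : Matrix (Fin m) (Fin n) ℝ) (β : EuclideanSpace ℝ (Fin n)) :
    EuclideanSpace ℝ (Fin m) :=
  WithLp.toLp 2 (X.mulVec β)

/-! Away from `Xβ = b` the smooth part `g β = ‖Xβ - b‖ + σ/2 ‖β‖² + τ/2 ‖Xβ - b‖²` of the objective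
is differentiable, while `λ p` is convex. Comparing the objective at `β̂` with its values on the
segment from `β̂` to `β`, bounding `λ p` there by its chord and letting the step tend to `0`, gives
`λ p β ≥ λ p β̂ - Dg(β̂)(β - β̂)`. Since `Xᵀ` is the adjoint of `X`, `-Dg(β̂)` is the inner product
with `Xᵀε̂/‖ε̂‖ - σβ̂ + τXᵀε̂`. -/

open Set

theorem IsNorm.convexOn {E : Type*} [AddCommGroup E] [Module ℝ E] {p : E → ℝ} (hp : IsNorm p) :
    ConvexOn ℝ univ p :=
  ⟨convex_univ, fun x _ y _ a b ha hb _ => by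
    calc p (a • x + b • y) ≤ p (a • x) + p (b • y) := hp.1 _ _
      _ = a • p x + b • p y := by
        rw [hp.2.1, hp.2.1, abs_of_nonneg ha, abs_of_nonneg hb, smul_eq_mul, smul_eq_mul]⟩

theorem IsMinOn.sub_fderiv_le_of_convexOn {E : Type*} [NormedAddCommGroup E] [NormedSpace ℝ E]
    {f h : E → ℝ} {f' : E →L[ℝ] ℝ} {s : Set E} {x y : E} (hmin : IsMinOn (f + h) s x)
    (hf : HasFDerivAt f f' x) (hh : ConvexOn ℝ s h) (hx : x ∈ s) (hy : y ∈ s) :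
    h x - f' (y - x) ≤ h y := by
  -- On `[0, 1]`, convexity of `h` gives `ψ t ≥ (f + h) (x + t • (y - x)) - h x ≥ f x = ψ 0`.
  set ψ : ℝ → ℝ := fun t => f (x + t • (y - x)) + t * (h y - h x)
  have hψ : HasDerivAt ψ (f' (y - x) + (h y - h x)) 0 := by
    have hline : HasDerivAt (fun t : ℝ => x + t • (y - x)) (y - x) 0 := by
      simpa using ((hasDerivAt_id (0 : ℝ)).smul_const (y - x)).const_add x
    exact (hf.comp_hasDerivAt_of_eq 0 hline (by simp)).add
      (by simpa using (hasDerivAt_id (0 : ℝ)).mul_const (h y - h x))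
  have hψmin : IsMinOn ψ (Icc 0 1) 0 := by
    rintro t ⟨ht0, ht1⟩
    have hseg : x + t • (y - x) = (1 - t) • x + t • y := by module
    have hmem : x + t • (y - x) ∈ s := hseg ▸ hh.1 hx hy (by linarith) ht0 (by ring)
    have hchord : h (x + t • (y - x)) ≤ (1 - t) * h x + t * h y :=
      hseg ▸ hh.2 hx hy (by linarith) ht0 (by ring)
    have hopt := isMinOn_iff.mp hmin _ hmem
    simp only [Pi.add_apply] at hopt
    simp only [ψ, mem_ofPred_eq, zero_smul, add_zero, zero_mul]
    linarith
  have hcone : (1 : ℝ) ∈ posTangentConeAt (Icc 0 1) 0 :=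
    mem_posTangentConeAt_of_segment_subset (by simp [segment_eq_Icc])
  have hslope := hψmin.localize.hasFDerivWithinAt_nonneg
    hψ.hasDerivWithinAt.hasFDerivWithinAt hcone
  rw [ContinuousLinearMap.toSpanSingleton_apply, one_smul] at hslope
  linarith

theorem HasFDerivAt.norm {G F : Type*} [NormedAddCommGroup G] [NormedSpace ℝ G]
    [NormedAddCommGroup F] [InnerProductSpace ℝ F] {f : G → F} {f' : G →L[ℝ] F} {x : G}
    (hf : HasFDerivAt f f' x) (h0 : f x ≠ 0) :
    HasFDerivAt (fun y => ‖f y‖) (‖f x‖⁻¹ • (innerSL ℝ (f x)).comp f') x := by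
  have hpos : 0 < ‖f x‖ := norm_pos_iff.mpr h0
  convert hf.norm_sq.sqrt (by positivity) using 1
  · funext y
    exact (Real.sqrt_sq (norm_nonneg _)).symm
  · rw [Real.sqrt_sq hpos.le]
    ext v
    simp only [smul_apply, ContinuousLinearMap.comp_apply, coe_innerSL_apply, smul_eq_mul,
      one_div, mul_inv_rev, nsmul_eq_mul, Nat.cast_ofNat]
    field_simp

theorem inner_mulVecE_transpose {m n : ℕ} (X : Matrix (Fin m) (Fin n) ℝ)
    (ε : EuclideanSpace ℝ (Fin m)) (d : EuclideanSpace ℝ (Fin n)) :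
    ⟪mulVecE X.transpose ε, d⟫ = ⟪ε, mulVecE X d⟫ := by
  have hadj := Matrix.toEuclideanLin_conjTranspose_eq_adjoint X
  rw [Matrix.conjTranspose_eq_transpose_of_trivial] at hadj
  change ⟪Matrix.toEuclideanLin X.transpose ε, d⟫ = _
  rw [hadj, LinearMap.adjoint_inner_left]
  rfl

theorem subgradient_at_minimizer_general {m n : ℕ} (X : Matrix (Fin m) (Fin n) ℝ)
    (b : EuclideanSpace ℝ (Fin m))
    (p : EuclideanSpace ℝ (Fin n) → ℝ) (hp : IsNorm p)
    (lam σ τ : ℝ) (hlam : 0 < lam)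
    (βh : EuclideanSpace ℝ (Fin n))
    (hmin : ∀ β : EuclideanSpace ℝ (Fin n),
      ‖mulVecE X βh - b‖ + lam * p βh + σ / 2 * ‖βh‖ ^ 2 +
          τ / 2 * ‖mulVecE X βh - b‖ ^ 2 ≤
        ‖mulVecE X β - b‖ + lam * p β + σ / 2 * ‖β‖ ^ 2 +
          τ / 2 * ‖mulVecE X β - b‖ ^ 2)
    (hfit : mulVecE X βh ≠ b)
    (εh : EuclideanSpace ℝ (Fin m)) (hεh : εh = b - mulVecE X βh) :
    ∀ β : EuclideanSpace ℝ (Fin n),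
      lam * p βh +
          ⟪‖εh‖⁻¹ • mulVecE X.transpose εh - σ • βh + τ • mulVecE X.transpose εh,
            β - βh⟫ ≤
        lam * p β := by
  intro β
  set A := LinearMap.toContinuousLinearMap (Matrix.toEuclideanLin X)
  have hA : ∀ v, A v = mulVecE X v := fun _ => rfl
  have hres : HasFDerivAt (fun β => mulVecE X β - b) A βh := A.hasFDerivAt.sub_const b
  have hsmooth := ((hres.norm (sub_ne_zero.mpr hfit)).add
    ((hasFDerivAt_id βh).norm_sq.const_mul (σ / 2))).add (hres.norm_sq.const_mul (τ / 2))
  have hopt := IsMinOn.sub_fderiv_le_of_convexOn (isMinOn_univ_iff.mpr fun β => by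
      simp only [Pi.add_apply, id, smul_eq_mul]; linarith [hmin β])
    hsmooth (hp.convexOn.smul hlam.le) (mem_univ βh) (mem_univ β)
  have hε : mulVecE X βh - b = -εh := by rw [hεh, neg_sub]
  simp only [hε, hA, norm_neg, map_neg, smul_neg, id_eq, smul_eq_mul, nsmul_eq_mul, Nat.cast_ofNat,
    ContinuousLinearMap.neg_comp, ContinuousLinearMap.comp_id, add_apply, neg_apply, smul_apply,
    ContinuousLinearMap.comp_apply, coe_innerSL_apply] at hopt
  rw [inner_add_left, inner_sub_left, real_inner_smul_left, real_inner_smul_left,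
    real_inner_smul_left, inner_mulVecE_transpose]
  linarith

/-- subgradient inequality for the minimizer of the regularized
square-root regression problem. -/
theorem subgradient_at_minimizer {m n : ℕ} (X : Matrix (Fin m) (Fin n) ℝ)
    (b : EuclideanSpace ℝ (Fin m))
    (p : EuclideanSpace ℝ (Fin n) → ℝ) (hp : IsNorm p)
    (lam σ τ : ℝ) (hlam : 0 < lam) (hσ : 0 ≤ σ) (hτ : 0 ≤ τ)
    (βh : EuclideanSpace ℝ (Fin n))
    (hmin : ∀ β : EuclideanSpace ℝ (Fin n),
      ‖mulVecE X βh - b‖ + lam * p βh + σ / 2 * ‖βh‖ ^ 2 +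
          τ / 2 * ‖mulVecE X βh - b‖ ^ 2 ≤
        ‖mulVecE X β - b‖ + lam * p β + σ / 2 * ‖β‖ ^ 2 +
          τ / 2 * ‖mulVecE X β - b‖ ^ 2)
    (hfit : mulVecE X βh ≠ b)
    (εh : EuclideanSpace ℝ (Fin m)) (hεh : εh = b - mulVecE X βh) :
    ∀ β : EuclideanSpace ℝ (Fin n),
      lam * p βh +
          ⟪‖εh‖⁻¹ • mulVecE X.transpose εh - σ • βh + τ • mulVecE X.transpose εh,
            β - βh⟫ ≤
        lam * p β :=
  subgradient_at_minimizer_general X b p hp lam σ τ hlam βh hmin hfit εh hεh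
end
end

section
/- Let X ∈ ℝ^{m×n}, β⁰ ∈ ℝⁿ, ε ∈ ℝ^m, b = Xβ⁰ + ε, p a norm on ℝⁿ, λ > 0, σ ≥ 0, τ ≥ 0, and let β̂ minimize F(β) = ‖Xβ − b‖ + λ p(β) + (σ/2)‖β‖² + (τ/2)‖Xβ − b‖² over ℝⁿ. Set ε̂ = b − Xβ̂ and assume ‖ε̂‖ ≠ 0. Then ⟨ε̂, X(β⁰ − β̂)⟩ ≤ (τ + 1/‖ε̂‖)⁻¹ · ( λ p(β⁰) + σ p_*(β⁰) p(β̂) ), where p_* is the dual norm of p. -/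
open scoped RealInnerProductSpace

noncomputable section

/-!
Minimality of `β̂` is tested along the segment `β̂ + t (β⁰ - β̂)`, `t ∈ (0, 1]`. The residual
norm is bounded above by its tangent paraboloid at `ε̂ ≠ 0` (AM-GM:
`2 ‖ε̂‖ ‖u - ε̂‖ ≤ ‖ε̂‖² + ‖u - ε̂‖²`), the penalty `λ p` by convexity, and the two quadratic terms
expand exactly. Dividing by `t` and letting `t → 0` gives the variational inequality
`(τ + 1/‖ε̂‖) ⟪ε̂, X(β⁰ - β̂)⟫ ≤ λ (p β⁰ - p β̂) + σ ⟪β̂, β⁰ - β̂⟫`.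
Finally `⟪β̂, β⁰ - β̂⟫ ≤ ⟪β⁰, β̂⟫ ≤ p_*(β⁰) p(β̂)`; the dual norm is a finite supremum because `p`
dominates a multiple of the Euclidean norm (compactness of the unit sphere).
-/

open Filter Topology Set

lemma nonpos_of_forall_le_mul {a C : ℝ} (h : ∀ t : ℝ, 0 < t → t ≤ 1 → a ≤ t * C) : a ≤ 0 := by
  have hlim : Tendsto (fun t : ℝ => t * C) (𝓝[>] 0) (𝓝 0) := by
    simpa using ((continuous_mul_const C).tendsto (0 : ℝ)).mono_left nhdsWithin_le_nhds
  refine ge_of_tendsto hlim ?_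
  filter_upwards [Ioo_mem_nhdsGT one_pos] with t ht using h t ht.1 ht.2.le

lemma norm_sub_le_quadratic_of_ne_zero {F : Type*} [NormedAddCommGroup F]
    [InnerProductSpace ℝ F] {e : F} (he : e ≠ 0) (u : F) :
    ‖u - e‖ ≤ ‖e‖ - ⟪u, e⟫ / ‖e‖ + ‖u‖ ^ 2 / (2 * ‖e‖) := by
  have hsq := norm_sub_sq_real u e
  rw [← sub_nonneg]
  have key : ‖e‖ - ⟪u, e⟫ / ‖e‖ + ‖u‖ ^ 2 / (2 * ‖e‖) - ‖u - e‖ =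
      (‖u - e‖ - ‖e‖) ^ 2 / (2 * ‖e‖) := by
    field_simp
    linear_combination (-1) * hsq
  rw [key]
  positivity

namespace IsNorm

section AddCommGroup

variable {E : Type*} [AddCommGroup E] [Module ℝ E] {p : E → ℝ}

lemma map_zero (hp : IsNorm p) : p 0 = 0 := (hp.2.2 0).2 rfl

lemma nonneg (hp : IsNorm p) (x : E) : 0 ≤ p x := by
  have hneg : p (-x) = p x := by simpa using hp.2.1 (-1) x
  have := hp.1 x (-x)
  rw [add_neg_cancel, hp.map_zero, hneg] at this
  linarith

lemma pos (hp : IsNorm p) {x : E} (hx : x ≠ 0) : 0 < p x :=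
  (hp.nonneg x).lt_of_ne fun h => hx ((hp.2.2 x).1 h.symm)

lemma convexOn_s6 (hp : IsNorm p) : ConvexOn ℝ univ p := by
  refine ⟨convex_univ, fun x _ y _ a b ha hb _ => (hp.1 _ _).trans ?_⟩
  rw [hp.2.1, hp.2.1, abs_of_nonneg ha, abs_of_nonneg hb, smul_eq_mul, smul_eq_mul]

end AddCommGroup

section FiniteDimensional

variable {E : Type*} [NormedAddCommGroup E] [NormedSpace ℝ E] [FiniteDimensional ℝ E]
  {p : E → ℝ}

lemma continuous (hp : IsNorm p) : Continuous p :=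
  continuousOn_univ.1 (hp.convexOn_s6.continuousOn isOpen_univ)

lemma exists_pos_mul_norm_le (hp : IsNorm p) : ∃ c > 0, ∀ x, c * ‖x‖ ≤ p x := by
  rcases subsingleton_or_nontrivial E with hE | hE
  · exact ⟨1, one_pos, fun x => by simp [Subsingleton.elim x 0, hp.map_zero]⟩
  obtain ⟨x₀, hx₀, hmin⟩ := (isCompact_sphere (0 : E) 1).exists_isMinOn
    (NormedSpace.sphere_nonempty.2 zero_le_one) hp.continuous.continuousOn
  have hx₀ : ‖x₀‖ = 1 := mem_sphere_zero_iff_norm.1 hx₀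
  refine ⟨p x₀, hp.pos (norm_ne_zero_iff.1 (by simp [hx₀])), fun x => ?_⟩
  rcases eq_or_ne x 0 with rfl | hx
  · simp [hp.map_zero]
  have hxn : 0 < ‖x‖ := norm_pos_iff.2 hx
  have hle : p x₀ ≤ p (‖x‖⁻¹ • x) := hmin (by simp [norm_smul, hxn.ne'])
  rw [hp.2.1, abs_of_pos (inv_pos.2 hxn), le_inv_mul_iff₀ hxn] at hle
  linarith

end FiniteDimensional

lemma inner_le_dualNorm {ι : Type*} [Fintype ι] {p : EuclideanSpace ℝ ι → ℝ} (hp : IsNorm p)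
    (z β : EuclideanSpace ℝ ι) : ⟪z, β⟫ ≤ dualNorm p z * p β := by
  obtain ⟨c, hc, hlow⟩ := hp.exists_pos_mul_norm_le
  have hbdd : BddAbove {r : ℝ | ∃ β : EuclideanSpace ℝ ι, p β ≤ 1 ∧ r = ⟪z, β⟫} := by
    refine ⟨‖z‖ / c, ?_⟩
    rintro _ ⟨β, hβ, rfl⟩
    have hβc : ‖β‖ ≤ 1 / c := by rw [le_div_iff₀ hc]; linarith [hlow β]
    calc ⟪z, β⟫ ≤ ‖z‖ * ‖β‖ := real_inner_le_norm z β
      _ ≤ ‖z‖ * (1 / c) := by gcongr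
      _ = ‖z‖ / c := by ring
  rcases eq_or_ne β 0 with rfl | hβ
  · simp [hp.map_zero]
  have hpβ := hp.pos hβ
  have hunit : ⟪z, (p β)⁻¹ • β⟫ ≤ dualNorm p z := le_csSup hbdd
    ⟨_, by rw [hp.2.1, abs_of_pos (inv_pos.2 hpβ), inv_mul_cancel₀ hpβ.ne'], rfl⟩
  rwa [real_inner_smul_right, inv_mul_le_iff₀ hpβ, mul_comm] at hunit

end IsNorm

lemma mulVecE_eq_toLpLin {m n : ℕ} (X : Matrix (Fin m) (Fin n) ℝ) :
    mulVecE X = Matrix.toLpLin 2 2 X :=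
  rfl

section Variational

variable {E F : Type*} [NormedAddCommGroup E] [InnerProductSpace ℝ E]
  [NormedAddCommGroup F] [InnerProductSpace ℝ F]

theorem mul_inner_residual_le_of_forall_le (A : E →ₗ[ℝ] F) (b : F) {g : E → ℝ}
    (hg : ConvexOn ℝ univ g) (σ τ : ℝ) {βh : E}
    (hmin : ∀ β, ‖A βh - b‖ + g βh + σ / 2 * ‖βh‖ ^ 2 + τ / 2 * ‖A βh - b‖ ^ 2 ≤
      ‖A β - b‖ + g β + σ / 2 * ‖β‖ ^ 2 + τ / 2 * ‖A β - b‖ ^ 2)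
    (hres : b - A βh ≠ 0) (β0 : E) :
    (τ + 1 / ‖b - A βh‖) * ⟪b - A βh, A (β0 - βh)⟫ ≤
      g β0 - g βh + σ * ⟪βh, β0 - βh⟫ := by
  set e := b - A βh
  set d := β0 - βh
  set v := A d
  rw [← sub_nonpos]
  refine nonpos_of_forall_le_mul
    (C := ‖v‖ ^ 2 / (2 * ‖e‖) + σ / 2 * ‖d‖ ^ 2 + τ / 2 * ‖v‖ ^ 2) fun t ht0 ht1 => ?_
  have hmin_t := hmin (βh + t • d)
  have hres0 : A βh - b = -e := (neg_sub _ _).symm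
  have hres_t : A (βh + t • d) - b = t • v - e := by
    simp only [map_add, map_smul, v, e]
    abel
  rw [hres0, hres_t, norm_neg] at hmin_t
  have hfit : ‖t • v - e‖ ≤ ‖e‖ - t * ⟪e, v⟫ / ‖e‖ + t ^ 2 * ‖v‖ ^ 2 / (2 * ‖e‖) := by
    simpa [norm_smul, mul_pow, real_inner_smul_left, real_inner_comm, abs_of_pos ht0]
      using norm_sub_le_quadratic_of_ne_zero hres (t • v)
  have hreg : g (βh + t • d) ≤ g βh + t * (g β0 - g βh) := by
    have hconv := hg.2 (mem_univ βh) (mem_univ β0) (sub_nonneg.2 ht1) ht0.le (sub_add_cancel 1 t)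
    have hpt : (1 - t) • βh + t • β0 = βh + t • d := by
      simp only [d, smul_sub, sub_smul, one_smul]
      abel
    rw [hpt, smul_eq_mul, smul_eq_mul] at hconv
    linarith
  have hridge : ‖βh + t • d‖ ^ 2 = ‖βh‖ ^ 2 + 2 * t * ⟪βh, d⟫ + t ^ 2 * ‖d‖ ^ 2 := by
    rw [norm_add_sq_real, norm_smul, real_inner_smul_right, mul_pow, Real.norm_eq_abs, sq_abs]
    ring
  have hsq : ‖t • v - e‖ ^ 2 = t ^ 2 * ‖v‖ ^ 2 - 2 * t * ⟪e, v⟫ + ‖e‖ ^ 2 := by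
    rw [norm_sub_sq_real, norm_smul, real_inner_smul_left, real_inner_comm, mul_pow,
      Real.norm_eq_abs, sq_abs]
    ring
  refine le_of_mul_le_mul_left ?_ ht0
  rw [hridge, hsq] at hmin_t
  linear_combination hmin_t + hfit + hreg

end Variational

theorem inner_residual_bound_general {m n : ℕ} (X : Matrix (Fin m) (Fin n) ℝ)
    (β0 : EuclideanSpace ℝ (Fin n))
    (b : EuclideanSpace ℝ (Fin m))
    (p : EuclideanSpace ℝ (Fin n) → ℝ) (hp : IsNorm p)
    (lam σ τ : ℝ) (hlam : 0 < lam) (hσ : 0 ≤ σ) (hτ : 0 ≤ τ)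
    (βh : EuclideanSpace ℝ (Fin n))
    (hmin : ∀ β : EuclideanSpace ℝ (Fin n),
      ‖mulVecE X βh - b‖ + lam * p βh + σ / 2 * ‖βh‖ ^ 2 +
          τ / 2 * ‖mulVecE X βh - b‖ ^ 2 ≤
        ‖mulVecE X β - b‖ + lam * p β + σ / 2 * ‖β‖ ^ 2 +
          τ / 2 * ‖mulVecE X β - b‖ ^ 2)
    (εh : EuclideanSpace ℝ (Fin m)) (hεh : εh = b - mulVecE X βh)
    (hεhne : ‖εh‖ ≠ 0) :
    ⟪εh, mulVecE X (β0 - βh)⟫ ≤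
      (τ + 1 / ‖εh‖)⁻¹ * (lam * p β0 + σ * dualNorm p β0 * p βh) := by
  subst hεh
  rw [mulVecE_eq_toLpLin] at hmin hεhne ⊢
  have hvar := mul_inner_residual_le_of_forall_le _ b (hp.convexOn_s6.smul hlam.le) σ τ hmin
    (norm_ne_zero_iff.1 hεhne) β0
  have hridge : σ * ⟪βh, β0 - βh⟫ ≤ σ * (dualNorm p β0 * p βh) := by
    gcongr
    calc ⟪βh, β0 - βh⟫ = ⟪β0, βh⟫ - ‖βh‖ ^ 2 := by
          rw [inner_sub_right, real_inner_self_eq_norm_sq, real_inner_comm]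
      _ ≤ ⟪β0, βh⟫ := sub_le_self _ (sq_nonneg _)
      _ ≤ dualNorm p β0 * p βh := hp.inner_le_dualNorm β0 βh
  have hpenalty : 0 ≤ lam * p βh := mul_nonneg hlam.le (hp.nonneg βh)
  rw [le_inv_mul_iff₀ (by positivity)]
  simp only [smul_eq_mul] at hvar
  linarith

/-- upper bound on `⟨ε̂, X(β⁰ − β̂)⟩`. -/
theorem inner_residual_bound {m n : ℕ} (X : Matrix (Fin m) (Fin n) ℝ)
    (β0 : EuclideanSpace ℝ (Fin n)) (ε : EuclideanSpace ℝ (Fin m))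
    (b : EuclideanSpace ℝ (Fin m)) (hb : b = mulVecE X β0 + ε)
    (p : EuclideanSpace ℝ (Fin n) → ℝ) (hp : IsNorm p)
    (lam σ τ : ℝ) (hlam : 0 < lam) (hσ : 0 ≤ σ) (hτ : 0 ≤ τ)
    (βh : EuclideanSpace ℝ (Fin n))
    (hmin : ∀ β : EuclideanSpace ℝ (Fin n),
      ‖mulVecE X βh - b‖ + lam * p βh + σ / 2 * ‖βh‖ ^ 2 +
          τ / 2 * ‖mulVecE X βh - b‖ ^ 2 ≤
        ‖mulVecE X β - b‖ + lam * p β + σ / 2 * ‖β‖ ^ 2 +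
          τ / 2 * ‖mulVecE X β - b‖ ^ 2)
    (εh : EuclideanSpace ℝ (Fin m)) (hεh : εh = b - mulVecE X βh)
    (hεhne : ‖εh‖ ≠ 0) :
    ⟪εh, mulVecE X (β0 - βh)⟫ ≤
      (τ + 1 / ‖εh‖)⁻¹ * (lam * p β0 + σ * dualNorm p β0 * p βh) :=
  inner_residual_bound_general X β0 b p hp lam σ τ hlam hσ hτ βh hmin εh hεh hεhne
end
end

section
/- Let X ∈ ℝ^{m×n}, b ∈ ℝ^m, λ > 0, let p₁ be a norm on ℝⁿ, and let p₂ : ℝⁿ → ℝ be a convex differentiable function. Define g(β) = ‖Xβ − b‖ + λ p₁(β) − p₂(β). Fix σ > 0, τ > 0 and β^k ∈ ℝⁿ, and define h_k(β) = ‖Xβ − b‖ + λ p₁(β) − p₂(β^k) − ⟨∇p₂(β^k), β − β^k⟩ + (σ/2)‖β − β^k‖² + (τ/2)‖Xβ − Xβ^k‖². Suppose β^{k+1} ≠ β^k, that −δ is a subgradient of h_k at β^{k+1} for some δ ∈ ℝⁿ with ‖δ‖ ≤ (σ/4)‖β^{k+1} − β^k‖ + τ‖X(β^{k+1} − β^k)‖²/(2‖β^{k+1}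 − β^k‖). Then g(β^k) ≥ g(β^{k+1}) + (σ/4)‖β^{k+1} − β^k‖². -/
open scoped RealInnerProductSpace

noncomputable section

/-! Convexity of `p₂` makes `h_k` a majorant of `g` that touches it at `β^k`, with surplus
`(σ/2)‖β - β^k‖² + (τ/2)‖X(β - β^k)‖²`. Testing the subgradient inequality of `h_k` at `β^{k+1}`
against `β^k` costs at most `‖δ‖‖β^{k+1} - β^k‖`, and the bound on `δ` keeps this below half of
the `σ`-surplus plus all of the `τ`-surplus. -/

namespace ConvexOn

variable {E : Type*} [NormedAddCommGroup E] [NormedSpace ℝ E] {s : Set E} {f : E → ℝ} {x y : E}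

theorem add_fderiv_sub_le (hf : ConvexOn ℝ s f) (hx : x ∈ s) (hy : y ∈ s) {f' : E →L[ℝ] ℝ}
    (hf' : HasFDerivAt f f' x) : f x + f' (y - x) ≤ f y := by
  have hline : HasDerivAt (f ∘ AffineMap.lineMap (k := ℝ) x y) (f' (y - x)) 0 := by
    refine hf'.comp_hasDerivAt_of_eq (0 : ℝ) AffineMap.hasDerivAt_lineMap ?_
    simp
  have hslope := (hf.comp_affineMap (AffineMap.lineMap x y)).le_slope_of_hasDerivAt
    (by simpa using hx) (by simpa using hy) zero_lt_one hline
  simpa [slope_def_field, map_sub, le_sub_iff_add_le'] using hslope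

theorem add_inner_gradient_sub_le {F : Type*} [NormedAddCommGroup F] [InnerProductSpace ℝ F]
    [CompleteSpace F] {s : Set F} {f : F → ℝ} {x y : F} (hf : ConvexOn ℝ s f) (hx : x ∈ s)
    (hy : y ∈ s) (hd : DifferentiableAt ℝ f x) : f x + ⟪gradient f x, y - x⟫ ≤ f y := by
  simpa using hf.add_fderiv_sub_le hx hy hd.hasGradientAt.hasFDerivAt

end ConvexOn

theorem mulVecE_sub {m n : ℕ} (X : Matrix (Fin m) (Fin n) ℝ) (x y : EuclideanSpace ℝ (Fin n)) :
    mulVecE X (x - y) = mulVecE X x - mulVecE X y := by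
  ext i
  simp [mulVecE, Matrix.mulVec_sub]

theorem sufficient_decrease_of_majorant {E : Type*} [NormedAddCommGroup E] [InnerProductSpace ℝ E]
    {g h : E → ℝ} {x y δ : E} {c q : ℝ} (hxy : h y = g y)
    (hmaj : g x + c / 2 * ‖x - y‖ ^ 2 + q ≤ h x) (hsub : h x + ⟪-δ, y - x⟫ ≤ h y)
    (hδ : ‖δ‖ * ‖x - y‖ ≤ c / 4 * ‖x - y‖ ^ 2 + q) :
    g x + c / 4 * ‖x - y‖ ^ 2 ≤ g y := by
  have hinner : ⟪-δ, y - x⟫ = ⟪δ, x - y⟫ := by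
    rw [inner_neg_left, ← inner_neg_right, neg_sub]
  have hcs : -(‖δ‖ * ‖x - y‖) ≤ ⟪δ, x - y⟫ := (abs_le.mp (abs_real_inner_le_norm δ (x - y))).1
  linarith

theorem pmm_sufficient_decrease_general {m n : ℕ} (X : Matrix (Fin m) (Fin n) ℝ)
    (b : EuclideanSpace ℝ (Fin m)) (lam : ℝ)
    (p1 : EuclideanSpace ℝ (Fin n) → ℝ)
    (p2 : EuclideanSpace ℝ (Fin n) → ℝ) (hp2conv : ConvexOn ℝ Set.univ p2)
    (hp2diff : ∀ x, DifferentiableAt ℝ p2 x)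
    (σ τ : ℝ)
    (βk βk1 δ : EuclideanSpace ℝ (Fin n)) (hne : βk1 ≠ βk)
    (g hk : EuclideanSpace ℝ (Fin n) → ℝ)
    (hg : ∀ β, g β = ‖mulVecE X β - b‖ + lam * p1 β - p2 β)
    (hhk : ∀ β, hk β = ‖mulVecE X β - b‖ + lam * p1 β - p2 βk -
      ⟪gradient p2 βk, β - βk⟫ + σ / 2 * ‖β - βk‖ ^ 2 +
      τ / 2 * ‖mulVecE X β - mulVecE X βk‖ ^ 2)
    (hsub : ∀ y : EuclideanSpace ℝ (Fin n), hk βk1 + ⟪-δ, y - βk1⟫ ≤ hk y)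
    (hδ : ‖δ‖ ≤ σ / 4 * ‖βk1 - βk‖ +
      τ * ‖mulVecE X (βk1 - βk)‖ ^ 2 / (2 * ‖βk1 - βk‖)) :
    g βk1 + σ / 4 * ‖βk1 - βk‖ ^ 2 ≤ g βk := by
  have hstep : 0 < ‖βk1 - βk‖ := norm_pos_iff.mpr (sub_ne_zero.mpr hne)
  have hk_self : hk βk = g βk := by simp [hhk, hg]
  have hk_major : g βk1 + σ / 2 * ‖βk1 - βk‖ ^ 2 + τ / 2 * ‖mulVecE X (βk1 - βk)‖ ^ 2 ≤ hk βk1 := by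
    have := hp2conv.add_inner_gradient_sub_le (Set.mem_univ βk) (Set.mem_univ βk1) (hp2diff βk)
    rw [hhk, hg, mulVecE_sub]
    linarith
  refine sufficient_decrease_of_majorant hk_self hk_major (hsub βk) ?_
  calc ‖δ‖ * ‖βk1 - βk‖
      ≤ (σ / 4 * ‖βk1 - βk‖ + τ * ‖mulVecE X (βk1 - βk)‖ ^ 2 / (2 * ‖βk1 - βk‖)) * ‖βk1 - βk‖ :=
        mul_le_mul_of_nonneg_right hδ hstep.le
    _ = σ / 4 * ‖βk1 - βk‖ ^ 2 + τ / 2 * ‖mulVecE X (βk1 - βk)‖ ^ 2 := by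
        field_simp

/-- sufficient decrease of `g` along the PMM iterates. -/
theorem pmm_sufficient_decrease {m n : ℕ} (X : Matrix (Fin m) (Fin n) ℝ)
    (b : EuclideanSpace ℝ (Fin m)) (lam : ℝ) (hlam : 0 < lam)
    (p1 : EuclideanSpace ℝ (Fin n) → ℝ) (hp1 : IsNorm p1)
    (p2 : EuclideanSpace ℝ (Fin n) → ℝ) (hp2conv : ConvexOn ℝ Set.univ p2)
    (hp2diff : ∀ x, DifferentiableAt ℝ p2 x)
    (σ τ : ℝ) (hσ : 0 < σ) (hτ : 0 < τ)
    (βk βk1 δ : EuclideanSpace ℝ (Fin n)) (hne : βk1 ≠ βk)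
    (g hk : EuclideanSpace ℝ (Fin n) → ℝ)
    (hg : ∀ β, g β = ‖mulVecE X β - b‖ + lam * p1 β - p2 β)
    (hhk : ∀ β, hk β = ‖mulVecE X β - b‖ + lam * p1 β - p2 βk -
      ⟪gradient p2 βk, β - βk⟫ + σ / 2 * ‖β - βk‖ ^ 2 +
      τ / 2 * ‖mulVecE X β - mulVecE X βk‖ ^ 2)
    (hsub : ∀ y : EuclideanSpace ℝ (Fin n), hk βk1 + ⟪-δ, y - βk1⟫ ≤ hk y)
    (hδ : ‖δ‖ ≤ σ / 4 * ‖βk1 - βk‖ +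
      τ * ‖mulVecE X (βk1 - βk)‖ ^ 2 / (2 * ‖βk1 - βk‖)) :
    g βk1 + σ / 4 * ‖βk1 - βk‖ ^ 2 ≤ g βk :=
  pmm_sufficient_decrease_general X b lam p1 p2 hp2conv hp2diff σ τ βk βk1 δ hne g hk hg hhk hsub hδ
end
end
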